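/- arXiv:2208.01534 — 3 statements merged into one kernel-verified Lean document; each statement's English description precedes it below -/
import Mathlib

section
/- Fix N ≥ 1, ratings r : Fin N → ℝ, and β ∈ ℝ, and let q(β) be the softmax(β) distribution, q(β)_i = exp(β r_i)/Σ_j exp(β r_j). If p is a probability vector on Fin N with Σ_i p_i r_i = Σ_i q(β)_i r_i and H(p) = H(q(β)), then p = q(β); that is, the softmax distribution is the unique entropy maximizer among recommendation distributions with its expected rating. -/
/-- The softmax(β) recommendation distribution for ratings `r`. -/
noncomputable def softmax (N : ℕ) (r : Fin N → ℝ) (β : ℝ) : Fin N → ℝ :=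
  fun i => Real.exp (β * r i) / ∑ j, Real.exp (β * r j)

/-- Shannon entropy of a probability vector (with the convention 0·log 0 = 0,
which holds since `Real.log 0 = 0`). -/
noncomputable def entropy (N : ℕ) (p : Fin N → ℝ) : ℝ :=
  -∑ i, p i * Real.log (p i)

/-- Pointwise Gibbs inequality: for `q > 0`, `x ≥ 0`,
`x log x − x log q − x + q ≥ 0`. -/
lemma gibbs_pointwise {q x : ℝ} (hq : 0 < q) (hx : 0 ≤ x) :
    0 ≤ x * Real.log x - x * Real.log q - x + q := by
  rcases eq_or_lt_of_le hx with h | h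
  · simp [← h]; linarith
  · have hlog : Real.log (q / x) ≤ q / x - 1 := Real.log_le_sub_one_of_pos (by positivity)
    have hd : Real.log (q / x) = Real.log q - Real.log x := Real.log_div hq.ne' h.ne'
    have := mul_le_mul_of_nonneg_left hlog hx
    rw [hd, mul_sub, mul_sub, mul_div_cancel₀ _ h.ne'] at this
    nlinarith

/-- Equality case: if the Gibbs expression is zero then `x = q`. -/
lemma gibbs_eq {q x : ℝ} (hq : 0 < q) (hx : 0 ≤ x)
    (h0 : x * Real.log x - x * Real.log q - x + q = 0) : x = q := by
  rcases eq_or_lt_of_le hx with h | h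
  · exfalso; rw [← h] at h0; simp at h0; linarith
  · by_contra hne
    have hne' : q / x ≠ 1 := by
      intro hc
      exact hne ((div_eq_one_iff_eq h.ne').mp hc).symm
    have hlog : Real.log (q / x) < q / x - 1 :=
      Real.log_lt_sub_one_of_pos (by positivity) hne'
    have hd : Real.log (q / x) = Real.log q - Real.log x := Real.log_div hq.ne' h.ne'
    have := mul_lt_mul_of_pos_left hlog h
    rw [hd, mul_sub, mul_sub, mul_div_cancel₀ _ h.ne'] at this
    nlinarith

/-- **Softmax is the unique entropy maximizer among recommendation
distributions with its expected rating.** -/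
theorem softmax_unique_entropy_maximizer
    (N : ℕ) (hN : 1 ≤ N) (r : Fin N → ℝ) (β : ℝ)
    (p : Fin N → ℝ) (hp0 : ∀ i, 0 ≤ p i) (hp1 : ∑ i, p i = 1)
    (hmean : ∑ i, p i * r i = ∑ i, softmax N r β i * r i)
    (hent : entropy N p = entropy N (softmax N r β)) :
    p = softmax N r β := by
  set q := softmax N r β with hqdef
  have hNe : Nonempty (Fin N) := ⟨⟨0, hN⟩⟩
  set Z : ℝ := ∑ j, Real.exp (β * r j) with hZ
  have hZpos : 0 < Z := Finset.sum_pos (fun j _ => Real.exp_pos _) Finset.univ_nonempty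
  have hqpos : ∀ i, 0 < q i := fun i => div_pos (Real.exp_pos _) hZpos
  have hq1 : ∑ i, q i = 1 := by
    simp only [hqdef, softmax, ← Finset.sum_div, ← hZ]
    exact div_self hZpos.ne'
  have hlogq : ∀ i, Real.log (q i) = β * r i - Real.log Z := fun i => by
    rw [hqdef]; simp only [softmax, ← hZ]
    rw [Real.log_div (Real.exp_pos _).ne' hZpos.ne', Real.log_exp]
  -- cross entropy equality
  have hcross : ∑ i, p i * Real.log (q i) = ∑ i, q i * Real.log (q i) := by
    have h1 : ∑ x, p x * (β * r x) = ∑ x, q x * (β * r x) := by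
      simp only [mul_left_comm]
      rw [← Finset.mul_sum, ← Finset.mul_sum, hmean]
    simp only [hlogq, mul_sub]
    rw [Finset.sum_sub_distrib, Finset.sum_sub_distrib, ← Finset.sum_mul, ← Finset.sum_mul,
      hp1, hq1, h1]
  have hsump : ∑ i, p i * Real.log (p i) = ∑ i, q i * Real.log (q i) := by
    have := hent
    simp only [entropy, neg_inj] at this
    rw [this]
  have hsum0 : ∑ i, (p i * Real.log (p i) - p i * Real.log (q i) - p i + q i) = 0 := by
    simp only [Finset.sum_add_distrib, Finset.sum_sub_distrib, hsump, hcross, hp1, hq1]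
    ring
  have hkey : ∀ i ∈ Finset.univ,
      p i * Real.log (p i) - p i * Real.log (q i) - p i + q i = 0 :=
    (Finset.sum_eq_zero_iff_of_nonneg
      (fun i _ => gibbs_pointwise (hqpos i) (hp0 i))).mp hsum0
  funext i
  exact gibbs_eq (hqpos i) (hp0 i) (hkey i (Finset.mem_univ i))
end

section
/- Fix N ≥ 1 and ratings r : Fin N → ℝ. For every real a with min_i r_i < a < max_i r_i, there exists β ∈ ℝ such that the softmax(β) distribution q(β)_i = exp(β r_i)/Σ_j exp(β r_j) satisfies Σ_i q(β)_i r_i = a; that is, the temperature parameter can be chosen so that the engagement (feasibility) constraint holds with equality. -/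
open Finset Filter Topology Real

noncomputable def gibbsMean {ι : Type*} [Fintype ι] (r : ι → ℝ) (β : ℝ) : ℝ :=
  (∑ i, exp (β * r i) * r i) / ∑ i, exp (β * r i)

theorem sum_softmax_mul_eq_gibbsMean (N : ℕ) (r : Fin N → ℝ) (β : ℝ) :
    ∑ i, softmax N r β i * r i = gibbsMean r β := by
  simp only [softmax, gibbsMean, sum_div, div_mul_eq_mul_div]

section gibbsMean

variable {ι : Type*} [Fintype ι] (r : ι → ℝ)

theorem sum_exp_mul_pos [Nonempty ι] (β : ℝ) : 0 < ∑ i, exp (β * r i) :=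
  sum_pos (fun _ _ => exp_pos _) univ_nonempty

theorem gibbsMean_neg_neg (β : ℝ) : gibbsMean (-r) (-β) = -gibbsMean r β := by
  simp only [gibbsMean, Pi.neg_apply, mul_neg, neg_mul, _root_.neg_neg, sum_neg_distrib, neg_div]

theorem continuous_gibbsMean [Nonempty ι] : Continuous (gibbsMean r) :=
  Continuous.div (by fun_prop) (by fun_prop) fun β => (sum_exp_mul_pos r β).ne'

theorem sub_gibbsMean_eq [Nonempty ι] (c β : ℝ) :
    c - gibbsMean r β = (∑ i, exp (β * r i) * (c - r i)) / ∑ i, exp (β * r i) := by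
  have hS := (sum_exp_mul_pos r β).ne'
  rw [eq_div_iff hS, sub_mul, gibbsMean, div_mul_cancel₀ _ hS, mul_sum, ← sum_sub_distrib]
  exact sum_congr rfl fun i _ => by ring

theorem gibbsMean_le_of_forall_le [Nonempty ι] {c : ℝ} (h : ∀ i, r i ≤ c) (β : ℝ) :
    gibbsMean r β ≤ c := by
  rw [← sub_nonneg, sub_gibbsMean_eq]
  exact div_nonneg (sum_nonneg fun i _ => mul_nonneg (exp_pos _).le (sub_nonneg.2 (h i)))
    (sum_exp_mul_pos r β).le

/-- Dividing by the single term `e^{β r i₀}` instead of the whole partition function. -/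
theorem sub_gibbsMean_le_of_forall_le {i₀ : ι} (h : ∀ i, r i ≤ r i₀) (β : ℝ) :
    r i₀ - gibbsMean r β ≤ ∑ i, (r i₀ - r i) * exp (β * (r i - r i₀)) := by
  have : Nonempty ι := ⟨i₀⟩
  have hnum : 0 ≤ ∑ i, exp (β * r i) * (r i₀ - r i) :=
    sum_nonneg fun i _ => mul_nonneg (exp_pos _).le (sub_nonneg.2 (h i))
  calc r i₀ - gibbsMean r β = (∑ i, exp (β * r i) * (r i₀ - r i)) / ∑ i, exp (β * r i) :=
        sub_gibbsMean_eq r _ β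
    _ ≤ (∑ i, exp (β * r i) * (r i₀ - r i)) / exp (β * r i₀) :=
        div_le_div_of_nonneg_left hnum (exp_pos _)
          (single_le_sum (f := fun i => exp (β * r i)) (fun i _ => (exp_pos _).le) (mem_univ i₀))
    _ = ∑ i, (r i₀ - r i) * exp (β * (r i - r i₀)) := by
        rw [sum_div]
        refine sum_congr rfl fun i _ => ?_
        rw [mul_comm, mul_div_assoc, ← exp_sub, ← mul_sub]

theorem tendsto_gibbsMean_atTop {i₀ : ι} (h : ∀ i, r i ≤ r i₀) :
    Tendsto (gibbsMean r) atTop (𝓝 (r i₀)) := by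
  have : Nonempty ι := ⟨i₀⟩
  have hterm (i : ι) : Tendsto (fun β => (r i₀ - r i) * exp (β * (r i - r i₀))) atTop (𝓝 0) := by
    rcases (h i).eq_or_lt with hi | hi
    · simp [hi]
    · have hlin : Tendsto (fun β : ℝ => β * (r i - r i₀)) atTop atBot :=
        tendsto_id.atTop_mul_const_of_neg (sub_neg.2 hi)
      simpa using (tendsto_exp_atBot.comp hlin).const_mul (r i₀ - r i)
  have hbound : Tendsto (fun β => ∑ i, (r i₀ - r i) * exp (β * (r i - r i₀))) atTop (𝓝 0) := by
    simpa using tendsto_finsetSum univ fun i _ => hterm i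
  have hgap : Tendsto (fun β => r i₀ - gibbsMean r β) atTop (𝓝 0) :=
    tendsto_of_tendsto_of_tendsto_of_le_of_le tendsto_const_nhds hbound
      (fun β => sub_nonneg.2 (gibbsMean_le_of_forall_le r h β)) (sub_gibbsMean_le_of_forall_le r h)
  simpa using hgap.const_sub (r i₀)

theorem tendsto_gibbsMean_atBot {i₀ : ι} (h : ∀ i, r i₀ ≤ r i) :
    Tendsto (gibbsMean r) atBot (𝓝 (r i₀)) := by
  have hneg : Tendsto (gibbsMean (-r)) atTop (𝓝 (-r i₀)) :=
    tendsto_gibbsMean_atTop (-r) fun i => neg_le_neg (h i)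
  have := (hneg.comp tendsto_neg_atBot_atTop).neg
  simpa [Function.comp_def, gibbsMean_neg_neg] using this

theorem Ioo_subset_range_gibbsMean {i₀ i₁ : ι} (h₀ : ∀ i, r i₀ ≤ r i) (h₁ : ∀ i, r i ≤ r i₁) :
    Set.Ioo (r i₀) (r i₁) ⊆ Set.range (gibbsMean r) := fun _ ha =>
  have : Nonempty ι := ⟨i₀⟩
  mem_range_of_exists_le_of_exists_ge (continuous_gibbsMean r)
    (((tendsto_gibbsMean_atBot r h₀).eventually (gt_mem_nhds ha.1)).exists.imp fun _ => le_of_lt)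
    (((tendsto_gibbsMean_atTop r h₁).eventually (lt_mem_nhds ha.2)).exists.imp fun _ => le_of_lt)

end gibbsMean

/-- **For any target engagement level strictly between the minimal and maximal
rating, some softmax temperature attains it exactly.** -/
theorem softmax_attains_engagement
    (N : ℕ) (hN : 1 ≤ N) (r : Fin N → ℝ) (a : ℝ)
    (hlow : Finset.univ.inf'
      (Finset.univ_nonempty_iff.mpr (Fin.pos_iff_nonempty.mp hN)) r < a)
    (hhigh : a < Finset.univ.sup'
      (Finset.univ_nonempty_iff.mpr (Fin.pos_iff_nonempty.mp hN)) r) :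
    ∃ β : ℝ, ∑ i, softmax N r β i * r i = a := by
  have hne : (univ : Finset (Fin N)).Nonempty := univ_nonempty_iff.mpr (Fin.pos_iff_nonempty.mp hN)
  obtain ⟨i₀, -, hi₀⟩ := exists_mem_eq_inf' hne r
  obtain ⟨i₁, -, hi₁⟩ := exists_mem_eq_sup' hne r
  have hmin (i : Fin N) : r i₀ ≤ r i := hi₀ ▸ inf'_le r (mem_univ i)
  have hmax (i : Fin N) : r i ≤ r i₁ := hi₁ ▸ le_sup' r (mem_univ i)
  obtain ⟨β, hβ⟩ := Ioo_subset_range_gibbsMean r hmin hmax ⟨hi₀ ▸ hlow, hi₁ ▸ hhigh⟩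
  exact ⟨β, (sum_softmax_mul_eq_gibbsMean N r β).trans hβ⟩
end

section
/- Fix N ≥ 1 and ratings r : Fin N → ℝ, and let a be a real with a < max_i r_i. Consider the problem of maximizing Shannon entropy H(p) over all probability vectors p on Fin N satisfying the engagement lower bound Σ_i p_i r_i ≥ a. Then any maximizer equals the softmax(β) distribution q(β)_i = exp(β r_i)/Σ_j exp(β r_j) for some β ≥ 0; in particular, if a ≤ (1/N)Σ_i r_i the maximizer is the uniform distribution (β = 0), and otherwise it is the softmax distribution with the unique β > 0 whose mean rating equals a. -/
/-- Gibbs' inequality, with the equality case. -/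
lemma gibbs {N : ℕ} (q w : Fin N → ℝ) (hq0 : ∀ i, 0 ≤ q i) (hq1 : ∑ i, q i = 1)
    (hw0 : ∀ i, 0 < w i) (hw1 : ∑ i, w i = 1) :
    entropy N q ≤ -∑ i, q i * Real.log (w i) ∧
    (entropy N q = -∑ i, q i * Real.log (w i) → q = w) := by
  have key : ∀ i, q i * Real.log (w i) - q i * Real.log (q i) ≤ w i - q i := by
    intro i
    rcases eq_or_lt_of_le (hq0 i) with h | h
    · simp [← h]; exact (hw0 i).le
    · have hd : 0 < w i / q i := div_pos (hw0 i) h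
      have := Real.log_le_sub_one_of_pos hd
      have hlog : Real.log (w i / q i) = Real.log (w i) - Real.log (q i) :=
        Real.log_div (hw0 i).ne' h.ne'
      rw [hlog] at this
      have := mul_le_mul_of_nonneg_left this (hq0 i)
      calc q i * Real.log (w i) - q i * Real.log (q i)
          = q i * (Real.log (w i) - Real.log (q i)) := by ring
        _ ≤ q i * (w i / q i - 1) := this
        _ = w i - q i := by field_simp
  have keystrict : ∀ i, q i ≠ w i →
      q i * Real.log (w i) - q i * Real.log (q i) < w i - q i := by
    intro i hne
    rcases eq_or_lt_of_le (hq0 i) with h | h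
    · simp [← h]; exact lt_of_le_of_ne (hw0 i).le (by simpa [← h] using hne)
    · have hd : 0 < w i / q i := div_pos (hw0 i) h
      have hne1 : w i / q i ≠ 1 := by
        intro hc; exact hne ((div_eq_one_iff_eq h.ne').mp hc).symm
      have := Real.log_lt_sub_one_of_pos hd hne1
      have hlog : Real.log (w i / q i) = Real.log (w i) - Real.log (q i) :=
        Real.log_div (hw0 i).ne' h.ne'
      rw [hlog] at this
      have := mul_lt_mul_of_pos_left this h
      calc q i * Real.log (w i) - q i * Real.log (q i)
          = q i * (Real.log (w i) - Real.log (q i)) := by ring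
        _ < q i * (w i / q i - 1) := this
        _ = w i - q i := by field_simp
  have hsum : ∑ i, (q i * Real.log (w i) - q i * Real.log (q i)) ≤
      ∑ i, (w i - q i) := Finset.sum_le_sum fun i _ => key i
  have hsum0 : ∑ i, (w i - q i) = 0 := by
    rw [Finset.sum_sub_distrib, hq1, hw1]; ring
  constructor
  · have : ∑ i, q i * Real.log (w i) - ∑ i, q i * Real.log (q i) ≤ 0 := by
      rw [← Finset.sum_sub_distrib]; linarith [hsum, hsum0.le]
    unfold entropy; linarith
  · intro heq
    funext i
    by_contra hne
    have hlt : ∑ i, (q i * Real.log (w i) - q i * Real.log (q i)) <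
        ∑ i, (w i - q i) :=
      Finset.sum_lt_sum (fun i _ => key i) ⟨i, Finset.mem_univ i, keystrict i hne⟩
    have : ∑ i, q i * Real.log (w i) - ∑ i, q i * Real.log (q i) < 0 := by
      rw [← Finset.sum_sub_distrib]; linarith [hlt, hsum0.le]
    unfold entropy at heq; linarith

section sm
variable {N : ℕ} [Nonempty (Fin N)] (r : Fin N → ℝ) (β : ℝ)

lemma Zpos' : 0 < ∑ j, Real.exp (β * r j) :=
  Finset.sum_pos (fun _ _ => Real.exp_pos _) Finset.univ_nonempty

lemma softmax_pos (i : Fin N) : 0 < softmax N r β i :=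
  div_pos (Real.exp_pos _) (Zpos' r β)

lemma softmax_sum : ∑ i, softmax N r β i = 1 := by
  unfold softmax
  rw [← Finset.sum_div, div_self (Zpos' r β).ne']

lemma softmax_log (i : Fin N) :
    Real.log (softmax N r β i) = β * r i - Real.log (∑ j, Real.exp (β * r j)) := by
  unfold softmax
  rw [Real.log_div (Real.exp_pos _).ne' (Zpos' r β).ne', Real.log_exp]

lemma neg_sum_mul_log_softmax (q : Fin N → ℝ) (hq1 : ∑ i, q i = 1) :
    -∑ i, q i * Real.log (softmax N r β i)
      = Real.log (∑ j, Real.exp (β * r j)) - β * ∑ i, q i * r i := by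
  have : ∀ i, q i * Real.log (softmax N r β i)
      = β * (q i * r i) - Real.log (∑ j, Real.exp (β * r j)) * q i := by
    intro i; rw [softmax_log]; ring
  simp only [this, Finset.sum_sub_distrib, ← Finset.mul_sum, hq1]
  ring

lemma smean_eq : ∑ i, softmax N r β i * r i
    = (∑ i, Real.exp (β * r i) * r i) / (∑ j, Real.exp (β * r j)) := by
  unfold softmax
  rw [Finset.sum_div]
  exact Finset.sum_congr rfl fun i _ => by rw [div_mul_eq_mul_div]

lemma smean_continuous : Continuous (fun β => ∑ i, softmax N r β i * r i) := by
  have : (fun β => ∑ i, softmax N r β i * r i)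
      = fun β => (∑ i, Real.exp (β * r i) * r i) / (∑ j, Real.exp (β * r j)) :=
    funext fun β => smean_eq r β
  rw [this]
  apply Continuous.div
  · exact continuous_finset_sum _ fun i _ =>
      ((continuous_id.mul continuous_const).rexp).mul continuous_const
  · exact continuous_finset_sum _ fun i _ => (continuous_id.mul continuous_const).rexp
  · exact fun β => (Zpos' r β).ne'

lemma smean_zero : ∑ i, softmax N r 0 i * r i = (∑ i, r i) / N := by
  rw [smean_eq]
  simp [Finset.sum_div, Finset.card_univ]

lemma smean_lower (M : ℝ) (hM : ∀ i, r i ≤ M) (i₀ : Fin N) (hi₀ : r i₀ = M) :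
    M - ∑ i, (M - r i) * Real.exp (-(β * (M - r i))) ≤ ∑ i, softmax N r β i * r i := by
  have hZ : Real.exp (β * M) ≤ ∑ j, Real.exp (β * r j) := by
    have := Finset.single_le_sum (f := fun j => Real.exp (β * r j))
      (fun j _ => (Real.exp_pos _).le) (Finset.mem_univ i₀)
    simpa [hi₀] using this
  have key : ∑ i, softmax N r β i * (M - r i)
      ≤ ∑ i, (M - r i) * Real.exp (-(β * (M - r i))) := by
    apply Finset.sum_le_sum
    intro i _
    have h1 : softmax N r β i ≤ Real.exp (β * r i) / Real.exp (β * M) := by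
      unfold softmax
      exact div_le_div_of_nonneg_left (Real.exp_pos _).le (Real.exp_pos _) hZ
    have h2 : Real.exp (β * r i) / Real.exp (β * M) = Real.exp (-(β * (M - r i))) := by
      rw [← Real.exp_sub]; ring_nf
    calc softmax N r β i * (M - r i)
        ≤ (Real.exp (β * r i) / Real.exp (β * M)) * (M - r i) :=
          mul_le_mul_of_nonneg_right h1 (by linarith [hM i])
      _ = (M - r i) * Real.exp (-(β * (M - r i))) := by rw [h2]; ring
  have hsum : ∑ i, softmax N r β i * (M - r i)
      = M * (∑ i, softmax N r β i) - ∑ i, softmax N r β i * r i := by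
    rw [Finset.mul_sum, ← Finset.sum_sub_distrib]
    exact Finset.sum_congr rfl fun i _ => by ring
  rw [hsum, softmax_sum, mul_one] at key
  linarith

lemma gtend (M : ℝ) (hM : ∀ i, r i ≤ M) :
    Filter.Tendsto (fun β => ∑ i, (M - r i) * Real.exp (-(β * (M - r i))))
      Filter.atTop (nhds 0) := by
  have h0 : (0 : ℝ) = ∑ _i : Fin N, (0 : ℝ) := by simp
  rw [h0]
  apply tendsto_finset_sum
  intro i _
  rcases eq_or_lt_of_le (hM i) with h | h
  · simp [← h]
  · have hc : 0 < M - r i := by linarith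
    have h1 : Filter.Tendsto (fun β : ℝ => β * (M - r i)) Filter.atTop Filter.atTop :=
      Filter.Tendsto.atTop_mul_const hc Filter.tendsto_id
    have h2 : Filter.Tendsto (fun β : ℝ => Real.exp (-(β * (M - r i))))
        Filter.atTop (nhds 0) :=
      Real.tendsto_exp_atBot.comp (Filter.tendsto_neg_atTop_atBot.comp h1)
    have := h2.const_mul (M - r i)
    simpa using this

lemma maximizer_eq (a : ℝ)
    (p : Fin N → ℝ) (hp0 : ∀ i, 0 ≤ p i) (hp1 : ∑ i, p i = 1)
    (hpa : a ≤ ∑ i, p i * r i)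
    (hmax : ∀ q : Fin N → ℝ, (∀ i, 0 ≤ q i) → ∑ i, q i = 1 →
      a ≤ ∑ i, q i * r i → entropy N q ≤ entropy N p)
    (hβ : 0 ≤ β)
    (hta : a ≤ ∑ i, softmax N r β i * r i)
    (htight : β * ((∑ i, softmax N r β i * r i) - a) = 0) :
    p = softmax N r β := by
  set w := softmax N r β with hw
  have hw0 : ∀ i, 0 < w i := softmax_pos r β
  have hw1 : ∑ i, w i = 1 := softmax_sum r β
  have hew : entropy N w
      = Real.log (∑ j, Real.exp (β * r j)) - β * ∑ i, w i * r i :=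
    neg_sum_mul_log_softmax r β w hw1
  have hG := gibbs p w hp0 hp1 hw0 hw1
  have h1 : entropy N w ≤ entropy N p := hmax w (fun i => (hw0 i).le) hw1 hta
  have h2 : -∑ i, p i * Real.log (w i)
      = Real.log (∑ j, Real.exp (β * r j)) - β * ∑ i, p i * r i :=
    neg_sum_mul_log_softmax r β p hp1
  have h3 : β * a ≤ β * ∑ i, p i * r i := mul_le_mul_of_nonneg_left hpa hβ
  have h4 : β * ∑ i, w i * r i = β * a := by nlinarith [htight]
  have heq : entropy N p = -∑ i, p i * Real.log (w i) := by
    have hup : -∑ i, p i * Real.log (w i) ≤ entropy N w := by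
      rw [h2, hew, h4]; linarith
    linarith [hG.1]
  exact hG.2 heq

end sm

/-- **Any maximizer of Shannon entropy subject to the engagement lower bound
`∑ p_i r_i ≥ a` (with `a` below the maximal rating) is a softmax distribution
with β ≥ 0: the uniform distribution (β = 0) if `a` is at most the average
rating, and otherwise the softmax with the unique β > 0 whose mean rating
equals `a`.** -/
theorem entropy_maximizer_is_softmax
    (N : ℕ) (hN : 1 ≤ N) (r : Fin N → ℝ) (a : ℝ)
    (hhigh : a < Finset.univ.sup'
      (Finset.univ_nonempty_iff.mpr (Fin.pos_iff_nonempty.mp hN)) r)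
    (p : Fin N → ℝ) (hp0 : ∀ i, 0 ≤ p i) (hp1 : ∑ i, p i = 1)
    (hpa : a ≤ ∑ i, p i * r i)
    (hmax : ∀ q : Fin N → ℝ, (∀ i, 0 ≤ q i) → ∑ i, q i = 1 →
      a ≤ ∑ i, q i * r i → entropy N q ≤ entropy N p) :
    (∃ β : ℝ, 0 ≤ β ∧ p = softmax N r β) ∧
    (a ≤ (∑ i, r i) / N → p = fun _ => 1 / (N : ℝ)) ∧
    ((∑ i, r i) / N < a →
      ∃ β : ℝ, (0 < β ∧ (∑ i, softmax N r β i * r i = a) ∧ p = softmax N r β) ∧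
        ∀ β' : ℝ, 0 < β' → (∑ i, softmax N r β' i * r i = a) → β' = β) := by
  haveI : Nonempty (Fin N) := Fin.pos_iff_nonempty.mp hN
  set M : ℝ := Finset.univ.sup'
      (Finset.univ_nonempty_iff.mpr (Fin.pos_iff_nonempty.mp hN)) r with hMdef
  have hMub : ∀ i, r i ≤ M := fun i => Finset.le_sup' r (Finset.mem_univ i)
  obtain ⟨i₀, -, hi₀⟩ := Finset.exists_mem_eq_sup'
      (Finset.univ_nonempty_iff.mpr (Fin.pos_iff_nonempty.mp hN)) r
  by_cases hcase : a ≤ (∑ i, r i) / N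
  · have hpu : p = softmax N r 0 :=
      maximizer_eq r 0 a p hp0 hp1 hpa hmax le_rfl
        (by rw [smean_zero]; exact hcase) (by ring)
    have hu : softmax N r 0 = fun _ => 1 / (N : ℝ) := by
      funext i; unfold softmax; simp [Finset.card_univ]
    refine ⟨⟨0, le_rfl, hpu⟩, fun _ => hpu.trans hu, fun h => absurd hcase (not_le.mpr h)⟩
  · push_neg at hcase
    have hcont := smean_continuous r
    have hg := gtend r M hMub
    have hMa : 0 < M - a := by linarith
    have hev : ∀ᶠ β in Filter.atTop,
        (∑ i, (M - r i) * Real.exp (-(β * (M - r i)))) < M - a :=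
      hg.eventually_lt_const hMa
    obtain ⟨B, hB1, hB2⟩ := (hev.and (Filter.eventually_ge_atTop (0 : ℝ))).exists
    have hfB : a < ∑ i, softmax N r B i * r i := by
      have := smean_lower r B M hMub i₀ hi₀.symm
      linarith
    have hf0 : ∑ i, softmax N r 0 i * r i = (∑ i, r i) / N := smean_zero r
    have hivt := intermediate_value_Icc hB2 hcont.continuousOn
    have hmem : a ∈ Set.Icc (∑ i, softmax N r 0 i * r i) (∑ i, softmax N r B i * r i) := by
      constructor
      · rw [hf0]; linarith
      · linarith
    obtain ⟨β, hβmem, hβa'⟩ := hivt hmem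
    have hβa : ∑ i, softmax N r β i * r i = a := hβa'
    have hβpos : 0 < β := by
      rcases eq_or_lt_of_le hβmem.1 with h | h
      · exfalso; rw [← h, hf0] at hβa; linarith
      · exact h
    have hpeq : ∀ γ : ℝ, 0 ≤ γ → (∑ i, softmax N r γ i * r i = a) → p = softmax N r γ := by
      intro γ hγ hγa
      exact maximizer_eq r γ a p hp0 hp1 hpa hmax hγ (le_of_eq hγa.symm) (by rw [hγa]; ring)
    have hp_β : p = softmax N r β := hpeq β hβpos.le hβa
    -- a non-maximal rating exists
    have hj : ∃ j, r j ≠ M := by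
      by_contra h
      push_neg at h
      have hsum : ∑ i, r i = N * M := by
        rw [Finset.sum_congr rfl fun i _ => h i]
        simp [Finset.card_univ, mul_comm]
      have hNpos : (0 : ℝ) < N := by exact_mod_cast hN
      have havg : (∑ i, r i) / N = M := by rw [hsum]; field_simp
      rw [havg] at hcase
      linarith
    obtain ⟨j, hj⟩ := hj
    have hratio : ∀ γ : ℝ, softmax N r γ i₀ / softmax N r γ j
        = Real.exp (γ * (r i₀ - r j)) := by
      intro γ
      unfold softmax
      rw [mul_sub, Real.exp_sub]
      rw [div_div_div_cancel_right₀]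
      exact (Zpos' r γ).ne'
    have huniq : ∀ γ γ' : ℝ, softmax N r γ = softmax N r γ' → γ = γ' := by
      intro γ γ' h
      have h1 : Real.exp (γ * (r i₀ - r j)) = Real.exp (γ' * (r i₀ - r j)) := by
        rw [← hratio, ← hratio, h]
      have h2 : γ * (r i₀ - r j) = γ' * (r i₀ - r j) := Real.exp_eq_exp.mp h1
      have hd : r i₀ - r j ≠ 0 := sub_ne_zero.mpr (fun hh => hj (by rw [← hh]; exact hi₀.symm))
      exact mul_right_cancel₀ hd h2
    refine ⟨⟨β, hβpos.le, hp_β⟩, fun h => absurd h (not_le.mpr hcase), fun _ => ?_⟩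
    refine ⟨β, ⟨hβpos, hβa, hp_β⟩, fun β' hβ' hβ'a => ?_⟩
    have := hpeq β' hβ'.le hβ'a
    exact huniq β' β (this ▸ hp_β ▸ rfl)
end
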